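/- Let H be a real Hilbert space, α ∈ (0, 1/2], T : H → H an α-averaged nonexpansive operator, and t ∈ (0,1). Let x ∈ H with Tx ≠ x, set θ := −⟨Tx − x, Tx − T²x⟩ / ‖Tx − x‖², T^θ := T + θ(T − I), and x⁺ := (1−t)T²x + t T^θ x. Assume Tx⁺ ≠ x⁺ and set θ⁺ := −⟨Tx⁺ − x⁺, Tx⁺ − T²x⁺⟩ / ‖Tx⁺ − x⁺‖², T^{θ⁺} := T + θ⁺(T − I), and τ := (1+θ⁺)/(1+θ). Then ‖T^{θ⁺}x⁺ − T^θ x‖ ≤ (τ + |1 − τ|)·‖x⁺ − x‖. -/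

import Mathlib

open RealInnerProductSpace Filter Topology

/-- `T` is nonexpansive: `‖T x − T y‖ ≤ ‖x − y‖` for all `x, y`. -/
def Nonexpansive {H : Type*} [NormedAddCommGroup H] [InnerProductSpace ℝ H]
    (T : H → H) : Prop :=
  ∀ x y, ‖T x - T y‖ ≤ ‖x - y‖

/-- `T` is `α`-averaged nonexpansive: `T = (1−α)I + αN` for a nonexpansive `N`. -/
def AveragedNE {H : Type*} [NormedAddCommGroup H] [InnerProductSpace ℝ H]
    (α : ℝ) (T : H → H) : Prop :=
  ∃ N : H → H, Nonexpansive N ∧ ∀ x, T x = (1 - α) • x + α • N x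

/-! With `d = T x - x`, the adaptive parameter `θ` is the one for which `T² x - T^θ x ⟂ d`, and
`α ≤ 1/2` forces `θ ∈ [0, 1]`. Then `T^θ` is `α(1 + θ)`-averaged, hence nonexpansive, and
`x⁺ - T^θ x` is the leg orthogonal to `d` of a right triangle with hypotenuse `x⁺ - x`.
Since `T^{θ⁺} = τ T^θ + (1 - τ) I`, the difference `T^{θ⁺} x⁺ - T^θ x` equals
`τ (T^θ x⁺ - T^θ x) + (1 - τ) (x⁺ - T^θ x)`, and both vectors are no longer than `x⁺ - x`. -/

section

variable {H : Type*} [NormedAddCommGroup H] [InnerProductSpace ℝ H]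

def relaxed (T : H → H) (θ : ℝ) (y : H) : H := T y + θ • (T y - y)

-- `0` at a fixed point of `T` (division by zero)
noncomputable def adaptiveParam (T : H → H) (u : H) : ℝ :=
  -⟪T u - u, T u - T (T u)⟫ / ‖T u - u‖ ^ 2

theorem norm_le_norm_add_of_inner_eq_zero {v w : H} (h : ⟪v, w⟫ = 0) : ‖w‖ ≤ ‖v + w‖ := by
  rw [mul_self_le_mul_self_iff (norm_nonneg _) (norm_nonneg _),
    norm_add_sq_eq_norm_sq_add_norm_sq_real h]
  exact le_add_of_nonneg_left (mul_self_nonneg _)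

theorem inner_nonneg_of_norm_sub_smul_le {α : ℝ} {a b : H} (hα : α ≤ 1 / 2)
    (h : ‖b - (1 - α) • a‖ ≤ α * ‖a‖) : 0 ≤ ⟪a, b⟫ := by
  have hsq := pow_le_pow_left₀ (norm_nonneg _) h 2
  rw [norm_sub_sq_real, norm_smul, real_inner_smul_right, real_inner_comm, Real.norm_eq_abs,
    mul_pow, mul_pow, sq_abs] at hsq
  -- `2 (1 - α) ⟪a, b⟫ ≥ ‖b‖² + (1 - 2α) ‖a‖² ≥ 0`
  nlinarith [sq_nonneg ‖b‖, sq_nonneg ‖a‖]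

theorem Nonexpansive.inner_sub_self_le {T : H → H} (hT : Nonexpansive T) (u : H) :
    ⟪T u - u, T (T u) - T u⟫ ≤ ‖T u - u‖ ^ 2 :=
  calc ⟪T u - u, T (T u) - T u⟫ ≤ ‖T u - u‖ * ‖T (T u) - T u‖ := real_inner_le_norm _ _
    _ ≤ ‖T u - u‖ * ‖T u - u‖ := by gcongr; exact hT _ _
    _ = ‖T u - u‖ ^ 2 := (sq _).symm

namespace AveragedNE

variable {α : ℝ} {T : H → H}

theorem norm_sub_sub_smul_le (hT : AveragedNE α T) (hα : 0 ≤ α) (x y : H) :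
    ‖T x - T y - (1 - α) • (x - y)‖ ≤ α * ‖x - y‖ := by
  obtain ⟨N, hN, hTN⟩ := hT
  have hdiff : T x - T y - (1 - α) • (x - y) = α • (N x - N y) := by
    rw [hTN, hTN]; module
  rw [hdiff, norm_smul, Real.norm_of_nonneg hα]
  exact mul_le_mul_of_nonneg_left (hN x y) hα

theorem nonexpansive (hT : AveragedNE α T) (hα₀ : 0 ≤ α) (hα₁ : α ≤ 1) : Nonexpansive T :=
  fun x y =>
  calc ‖T x - T y‖ ≤ ‖(1 - α) • (x - y)‖ + ‖T x - T y - (1 - α) • (x - y)‖ :=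
        norm_le_norm_add_norm_sub' _ _
    _ ≤ (1 - α) * ‖x - y‖ + α * ‖x - y‖ := by
        rw [norm_smul, Real.norm_of_nonneg (by linarith)]
        gcongr
        exact hT.norm_sub_sub_smul_le hα₀ x y
    _ = ‖x - y‖ := by ring

theorem relaxed (hT : AveragedNE α T) (θ : ℝ) :
    AveragedNE (α * (1 + θ)) (relaxed T θ) := by
  obtain ⟨N, hN, hTN⟩ := hT
  refine ⟨N, hN, fun y => ?_⟩
  rw [_root_.relaxed, hTN]
  module

theorem inner_sub_self_nonneg (hT : AveragedNE α T) (hα₀ : 0 ≤ α) (hα₁ : α ≤ 1 / 2) (u : H) :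
    0 ≤ ⟪T u - u, T (T u) - T u⟫ :=
  inner_nonneg_of_norm_sub_smul_le hα₁ (hT.norm_sub_sub_smul_le hα₀ (T u) u)

end AveragedNE

theorem adaptiveParam_eq (T : H → H) (u : H) :
    adaptiveParam T u = ⟪T u - u, T (T u) - T u⟫ / ‖T u - u‖ ^ 2 := by
  rw [adaptiveParam, ← inner_neg_right, neg_sub]

theorem AveragedNE.adaptiveParam_mem_Icc {α : ℝ} {T : H → H} (hT : AveragedNE α T)
    (hα₀ : 0 ≤ α) (hα₁ : α ≤ 1 / 2) (u : H) : adaptiveParam T u ∈ Set.Icc 0 1 := by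
  rw [adaptiveParam_eq]
  exact ⟨div_nonneg (hT.inner_sub_self_nonneg hα₀ hα₁ u) (sq_nonneg _),
    div_le_one_of_le₀ ((hT.nonexpansive hα₀ (by linarith)).inner_sub_self_le u) (sq_nonneg _)⟩

theorem inner_sub_relaxed_adaptiveParam_eq_zero (T : H → H) (u : H) :
    ⟪T u - u, T (T u) - relaxed T (adaptiveParam T u) u⟫ = 0 := by
  rcases eq_or_ne (T u - u) 0 with hfix | hmove
  · rw [hfix, inner_zero_left]
  have hsplit : T (T u) - relaxed T (adaptiveParam T u) u
      = (T (T u) - T u) - adaptiveParam T u • (T u - u) := by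
    rw [relaxed]; abel
  rw [hsplit, inner_sub_right, real_inner_smul_right, real_inner_self_eq_norm_sq,
    adaptiveParam_eq, div_mul_cancel₀ _ (by positivity), sub_self]

theorem norm_sub_relaxed_le_of_inner_eq_zero {T : H → H} {θ : ℝ} {x : H} (t : ℝ)
    (h : ⟪T x - x, T (T x) - relaxed T θ x⟫ = 0) :
    ‖(1 - t) • T (T x) + t • relaxed T θ x - relaxed T θ x‖
      ≤ ‖(1 - t) • T (T x) + t • relaxed T θ x - x‖ := by
  set w := (1 - t) • (T (T x) - relaxed T θ x) with hw
  have hleg : (1 - t) • T (T x) + t • relaxed T θ x - relaxed T θ x = w := by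
    rw [hw]; module
  have hhyp : (1 - t) • T (T x) + t • relaxed T θ x - x = (1 + θ) • (T x - x) + w := by
    rw [hw, relaxed]; module
  have horth : ⟪(1 + θ) • (T x - x), w⟫ = 0 := by
    rw [hw, real_inner_smul_left, real_inner_smul_right, h, mul_zero, mul_zero]
  rw [hleg, hhyp]
  exact norm_le_norm_add_of_inner_eq_zero horth

theorem relaxed_eq_smul_relaxed_add_smul (T : H → H) {θ θ' τ : ℝ} (h : 1 + θ' = τ * (1 + θ))
    (y : H) : relaxed T θ' y = τ • relaxed T θ y + (1 - τ) • y := by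
  obtain rfl : θ' = τ * (1 + θ) - 1 := by linarith
  rw [relaxed, relaxed]
  module

end

theorem stmt_12_general {H : Type*} [NormedAddCommGroup H] [InnerProductSpace ℝ H]
    (α : ℝ) (hα : α ∈ Set.Ioc (0 : ℝ) (1/2))
    (T : H → H) (hT : AveragedNE α T)
    (t : ℝ)
    (x : H)
    (θ : ℝ) (hθ : θ = -⟪T x - x, T x - T (T x)⟫ / ‖T x - x‖ ^ 2)
    (xp : H) (hxp : xp = (1 - t) • T (T x) + t • (T x + θ • (T x - x)))
    (θp : ℝ) (hθp : θp = -⟪T xp - xp, T xp - T (T xp)⟫ / ‖T xp - xp‖ ^ 2)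
    (τ : ℝ) (hτ : τ = (1 + θp) / (1 + θ)) :
    ‖(T xp + θp • (T xp - xp)) - (T x + θ • (T x - x))‖ ≤
      (τ + |1 - τ|) * ‖xp - x‖ := by
  obtain ⟨hα₀, hα₁⟩ := hα
  obtain ⟨hθ₀, hθ₁⟩ : θ ∈ Set.Icc 0 1 := hθ ▸ hT.adaptiveParam_mem_Icc hα₀.le hα₁ x
  obtain ⟨hθp₀, -⟩ : θp ∈ Set.Icc 0 1 := hθp ▸ hT.adaptiveParam_mem_Icc hα₀.le hα₁ xp
  have hτ₀ : 0 ≤ τ := hτ ▸ by positivity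
  have hsplit : relaxed T θp xp = τ • relaxed T θ xp + (1 - τ) • xp :=
    relaxed_eq_smul_relaxed_add_smul T (by rw [hτ, div_mul_cancel₀]; positivity) xp
  have hstep : ‖relaxed T θ xp - relaxed T θ x‖ ≤ ‖xp - x‖ :=
    (hT.relaxed θ).nonexpansive (by positivity) (by nlinarith) xp x
  have hleg : ‖xp - relaxed T θ x‖ ≤ ‖xp - x‖ := by
    rw [hxp]
    exact norm_sub_relaxed_le_of_inner_eq_zero t
      (hθ ▸ inner_sub_relaxed_adaptiveParam_eq_zero T x)
  change ‖relaxed T θp xp - relaxed T θ x‖ ≤ _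
  calc ‖relaxed T θp xp - relaxed T θ x‖
      = ‖τ • (relaxed T θ xp - relaxed T θ x) + (1 - τ) • (xp - relaxed T θ x)‖ := by
        rw [hsplit]; congr 1; module
    _ ≤ τ * ‖xp - x‖ + |1 - τ| * ‖xp - x‖ := by
        refine norm_add_le_of_le ?_ ?_ <;> rw [norm_smul, Real.norm_eq_abs]
        · rw [abs_of_nonneg hτ₀]; gcongr
        · gcongr
    _ = (τ + |1 - τ|) * ‖xp - x‖ := by ring

theorem stmt_12 {H : Type*} [NormedAddCommGroup H] [InnerProductSpace ℝ H]
    [CompleteSpace H]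
    (α : ℝ) (hα : α ∈ Set.Ioc (0 : ℝ) (1/2))
    (T : H → H) (hT : AveragedNE α T)
    (t : ℝ) (ht : t ∈ Set.Ioo (0 : ℝ) 1)
    (x : H) (hx : T x ≠ x)
    (θ : ℝ) (hθ : θ = -⟪T x - x, T x - T (T x)⟫ / ‖T x - x‖ ^ 2)
    (xp : H) (hxp : xp = (1 - t) • T (T x) + t • (T x + θ • (T x - x)))
    (hxp' : T xp ≠ xp)
    (θp : ℝ) (hθp : θp = -⟪T xp - xp, T xp - T (T xp)⟫ / ‖T xp - xp‖ ^ 2)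
    (τ : ℝ) (hτ : τ = (1 + θp) / (1 + θ)) :
    ‖(T xp + θp • (T xp - xp)) - (T x + θ • (T x - x))‖ ≤
      (τ + |1 - τ|) * ‖xp - x‖ :=
  stmt_12_general α hα T hT t x θ hθ xp hxp θp hθp τ hτ
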